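/- Let F be a totally real number field of degree n with real embeddings v₁,…,v_n. For every γ ∈ SL₂(O_F), every z ∈ ℍⁿ, and every s ∈ ℂ, the Eisenstein series satisfies E(γ·z, s) = E(z, s), where γ acts on ℍⁿ componentwise by Möbius transformations via the embeddings v_j. -/

import Mathlib

open NumberField

/-- The summand `N(y)^s / |N(μz+ν)|^{2s}` of the Eisenstein series `E(z, s)`,
for `z ∈ ℍⁿ` and `p = (μ, ν) ∈ O_F²`. -/
noncomputable def eisSummand (n : ℕ) (F : Type*) [Field F] [NumberField F]
    (v : Fin n → (F →+* ℝ)) (z : Fin n → ℂ) (s : ℂ) (p : 𝓞 F × 𝓞 F) : ℂ :=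
  ((∏ j, (z j).im : ℝ) : ℂ) ^ s /
    (((‖∏ j, ((v j (algebraMap (𝓞 F) F p.1) : ℂ) * z j +
      (v j (algebraMap (𝓞 F) F p.2) : ℂ))‖) : ℝ) : ℂ) ^ (2 * s)

/-- The componentwise Möbius action of `γ ∈ SL₂(O_F)` on `ℍⁿ` via the embeddings `v j`. -/
noncomputable def moebiusHn (n : ℕ) (F : Type*) [Field F] [NumberField F]
    (v : Fin n → (F →+* ℝ)) (γ : Matrix.SpecialLinearGroup (Fin 2) (𝓞 F))
    (z : Fin n → ℂ) : Fin n → ℂ := fun j =>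
  ((v j (algebraMap (𝓞 F) F ((γ : Matrix (Fin 2) (Fin 2) (𝓞 F)) 0 0)) : ℂ) * z j +
      (v j (algebraMap (𝓞 F) F ((γ : Matrix (Fin 2) (Fin 2) (𝓞 F)) 0 1)) : ℂ)) /
    ((v j (algebraMap (𝓞 F) F ((γ : Matrix (Fin 2) (Fin 2) (𝓞 F)) 1 0)) : ℂ) * z j +
      (v j (algebraMap (𝓞 F) F ((γ : Matrix (Fin 2) (Fin 2) (𝓞 F)) 1 1)) : ℂ))


section MyAux


section Aux

lemma myCpowKey (X A B : ℝ) (hX : 0 < X) (hA : 0 < A) (hB : 0 < B) (s : ℂ) :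
    ((X / B ^ 2 : ℝ) : ℂ) ^ s / ((A / B : ℝ) : ℂ) ^ (2 * s) =
      ((X : ℝ) : ℂ) ^ s / ((A : ℝ) : ℂ) ^ (2 * s) := by
  have h1 : ((X / B ^ 2 : ℝ) : ℂ) ≠ 0 := by
    exact_mod_cast (div_pos hX (pow_pos hB 2)).ne'
  have h2 : ((A / B : ℝ) : ℂ) ≠ 0 := by exact_mod_cast (div_pos hA hB).ne'
  have h3 : ((X : ℝ) : ℂ) ≠ 0 := by exact_mod_cast hX.ne'
  have h4 : ((A : ℝ) : ℂ) ≠ 0 := by exact_mod_cast hA.ne'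
  rw [Complex.cpow_def_of_ne_zero h1, Complex.cpow_def_of_ne_zero h2,
    Complex.cpow_def_of_ne_zero h3, Complex.cpow_def_of_ne_zero h4,
    ← Complex.ofReal_log (div_pos hX (pow_pos hB 2)).le,
    ← Complex.ofReal_log (div_pos hA hB).le, ← Complex.ofReal_log hX.le,
    ← Complex.ofReal_log hA.le, ← Complex.exp_sub, ← Complex.exp_sub]
  congr 1
  rw [Real.log_div hX.ne' (pow_pos hB 2).ne', Real.log_div hA.ne' hB.ne',
    Real.log_pow]
  push_cast
  ring

lemma myLinNe {a b : ℝ} {z : ℂ} (hz : z.im ≠ 0) (h : ¬(a = 0 ∧ b = 0)) :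
    (a : ℂ) * z + b ≠ 0 := by
  intro h0
  have him : a * z.im = 0 := by
    have := congrArg Complex.im h0
    simpa using this
  have ha : a = 0 := by
    rcases mul_eq_zero.1 him with h' | h'
    · exact h'
    · exact absurd h' hz
  have hb : b = 0 := by
    have := congrArg Complex.re h0
    simpa [ha] using this
  exact h ⟨ha, hb⟩

lemma myImMoebius {a b c d : ℝ} (hdet : a * d - b * c = 1) (z : ℂ) :
    (((a : ℂ) * z + b) / ((c : ℂ) * z + d)).im
      = z.im / ‖(c : ℂ) * z + d‖ ^ 2 := by
  rw [Complex.div_im, Complex.sq_norm, ← sub_div]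
  congr 1
  simp only [Complex.add_re, Complex.add_im, Complex.mul_re, Complex.mul_im,
    Complex.ofReal_re, Complex.ofReal_im]
  ring_nf
  linear_combination z.im * hdet

lemma myProdEmb (F : Type*) [Field F] [NumberField F] (n : ℕ)
    (hdeg : Module.finrank ℚ F = n)
    (v : Fin n → (F →+* ℝ)) (hv : Function.Injective v) (x : F) :
    ∏ j, v j x = (Algebra.norm ℚ x : ℝ) := by
  have hσinj : Function.Injective (fun j => Complex.ofRealHom.comp (v j)) := by
    intro a b h
    apply hv
    ext t
    have := congrArg (fun φ => (φ : F →+* ℂ) t) h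
    simpa using this
  have hcard : Fintype.card (Fin n) = Fintype.card (F →+* ℂ) := by
    rw [NumberField.Embeddings.card F ℂ, hdeg, Fintype.card_fin]
  have hbij : Function.Bijective (fun j => Complex.ofRealHom.comp (v j)) :=
    (Fintype.bijective_iff_injective_and_card _).2 ⟨hσinj, hcard⟩
  have h1 : ∏ φ : F →+* ℂ, φ x = algebraMap ℚ ℂ (Algebra.norm ℚ x) := by
    rw [Algebra.norm_eq_prod_embeddings ℚ (E := ℂ) x]
    exact Fintype.prod_equiv (RingHom.equivRatAlgHom F ℂ) (fun φ : F →+* ℂ => φ x)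
      (fun σ : F →ₐ[ℚ] ℂ => σ x) (fun φ => rfl)
  have h2 : ∏ j, (Complex.ofRealHom.comp (v j)) x = ∏ φ : F →+* ℂ, φ x :=
    Fintype.prod_bijective _ hbij _ _ (fun j => rfl)
  have h3 : ((∏ j, v j x : ℝ) : ℂ) = ((Algebra.norm ℚ x : ℝ) : ℂ) := by
    rw [Complex.ofReal_prod]
    rw [show (∏ j, ((v j x : ℝ) : ℂ)) = ∏ j, (Complex.ofRealHom.comp (v j)) x from rfl,
      h2, h1]
    simp [eq_ratCast]
  exact_mod_cast h3

lemma myProdUnit (F : Type*) [Field F] [NumberField F] (n : ℕ)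
    (hdeg : Module.finrank ℚ F = n)
    (v : Fin n → (F →+* ℝ)) (hv : Function.Injective v) (ε : (𝓞 F)ˣ) :
    |∏ j, v j (algebraMap (𝓞 F) F (ε : 𝓞 F))| = 1 := by
  rw [myProdEmb F n hdeg v hv]
  have hu : IsUnit (Algebra.norm ℤ (ε : 𝓞 F)) := ε.isUnit.map (Algebra.norm ℤ)
  have hnorm : Algebra.norm ℚ (algebraMap (𝓞 F) F (ε : 𝓞 F))
      = ((Algebra.norm ℤ (ε : 𝓞 F) : ℤ) : ℚ) := (Algebra.coe_norm_int _).symm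
  rcases Int.isUnit_iff.1 hu with h | h <;> rw [hnorm, h] <;> norm_num

end Aux


variable {F : Type*} [Field F] [NumberField F]

/-- Right multiplication of the row vector `p` by the matrix `γ`. -/
def myTmap (γ : Matrix.SpecialLinearGroup (Fin 2) (𝓞 F)) (p : 𝓞 F × 𝓞 F) : 𝓞 F × 𝓞 F :=
  (p.1 * (γ : Matrix (Fin 2) (Fin 2) (𝓞 F)) 0 0 + p.2 * (γ : Matrix (Fin 2) (Fin 2) (𝓞 F)) 1 0,
   p.1 * (γ : Matrix (Fin 2) (Fin 2) (𝓞 F)) 0 1 + p.2 * (γ : Matrix (Fin 2) (Fin 2) (𝓞 F)) 1 1)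

lemma myDet (γ : Matrix.SpecialLinearGroup (Fin 2) (𝓞 F)) :
    (γ : Matrix (Fin 2) (Fin 2) (𝓞 F)) 0 0 * (γ : Matrix (Fin 2) (Fin 2) (𝓞 F)) 1 1
      - (γ : Matrix (Fin 2) (Fin 2) (𝓞 F)) 0 1 * (γ : Matrix (Fin 2) (Fin 2) (𝓞 F)) 1 0 = 1 := by
  have := γ.2
  rwa [Matrix.det_fin_two] at this

lemma myTmap_inv (γ : Matrix.SpecialLinearGroup (Fin 2) (𝓞 F)) (p : 𝓞 F × 𝓞 F) :
    myTmap γ⁻¹ (myTmap γ p) = p := by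
  have hdet := myDet γ
  have hinv : (γ⁻¹ : Matrix.SpecialLinearGroup (Fin 2) (𝓞 F))
      = (!![(γ : Matrix (Fin 2) (Fin 2) (𝓞 F)) 1 1, -(γ : Matrix (Fin 2) (Fin 2) (𝓞 F)) 0 1;
          -(γ : Matrix (Fin 2) (Fin 2) (𝓞 F)) 1 0, (γ : Matrix (Fin 2) (Fin 2) (𝓞 F)) 0 0]
            : Matrix (Fin 2) (Fin 2) (𝓞 F)) := by
    rw [Matrix.SpecialLinearGroup.coe_inv, Matrix.adjugate_fin_two]
  refine Prod.ext ?_ ?_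
  · simp [myTmap, hinv]
    linear_combination (p.1 : 𝓞 F) * hdet
  · simp [myTmap, hinv]
    linear_combination (p.2 : 𝓞 F) * hdet

lemma myTmap_ne (γ : Matrix.SpecialLinearGroup (Fin 2) (𝓞 F)) {p : 𝓞 F × 𝓞 F} (hp : p ≠ 0) :
    myTmap γ p ≠ 0 := by
  intro h
  apply hp
  rw [← myTmap_inv γ p, h]
  simp [myTmap]

lemma myTmap_unit (γ : Matrix.SpecialLinearGroup (Fin 2) (𝓞 F)) (p : 𝓞 F × 𝓞 F) (u : 𝓞 F) :
    myTmap γ (u * p.1, u * p.2) = (u * (myTmap γ p).1, u * (myTmap γ p).2) := by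
  apply Prod.ext <;> simp only [myTmap] <;> ring

lemma mySummandUnit (n : ℕ) (hdeg : Module.finrank ℚ F = n)
    (v : Fin n → (F →+* ℝ)) (hv : Function.Injective v)
    (z : Fin n → ℂ) (s : ℂ) (p : 𝓞 F × 𝓞 F) (ε : (𝓞 F)ˣ) :
    eisSummand n F v z s ((ε : 𝓞 F) * p.1, (ε : 𝓞 F) * p.2) = eisSummand n F v z s p := by
  have h1 : ∀ j, ((v j (algebraMap (𝓞 F) F ((ε : 𝓞 F) * p.1)) : ℂ)) * z j +
      ((v j (algebraMap (𝓞 F) F ((ε : 𝓞 F) * p.2)) : ℂ))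
      = ((v j (algebraMap (𝓞 F) F (ε : 𝓞 F)) : ℂ)) *
        (((v j (algebraMap (𝓞 F) F p.1) : ℂ)) * z j +
          ((v j (algebraMap (𝓞 F) F p.2) : ℂ))) := by
    intro j
    rw [map_mul, map_mul, map_mul, map_mul]
    push_cast
    ring
  have h2 : ‖∏ j, (((v j (algebraMap (𝓞 F) F ((ε : 𝓞 F) * p.1)) : ℂ)) * z j +
        ((v j (algebraMap (𝓞 F) F ((ε : 𝓞 F) * p.2)) : ℂ)))‖
      = ‖∏ j, (((v j (algebraMap (𝓞 F) F p.1) : ℂ)) * z j +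
        ((v j (algebraMap (𝓞 F) F p.2) : ℂ)))‖ := by
    rw [Finset.prod_congr rfl (fun j _ => h1 j), Finset.prod_mul_distrib, norm_mul]
    have h3 : ‖∏ j, ((v j (algebraMap (𝓞 F) F (ε : 𝓞 F)) : ℂ))‖ = 1 := by
      rw [← Complex.ofReal_prod, Complex.norm_real, Real.norm_eq_abs, myProdUnit F n hdeg v hv ε]
    rw [h3, one_mul]
  simp only [eisSummand]
  rw [h2]

lemma mySummandMoebius (n : ℕ)
    (v : Fin n → (F →+* ℝ)) (γ : Matrix.SpecialLinearGroup (Fin 2) (𝓞 F))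
    (z : Fin n → ℂ) (hz : ∀ j, 0 < (z j).im) (s : ℂ) (p : 𝓞 F × 𝓞 F) (hp : p ≠ 0) :
    eisSummand n F v (moebiusHn n F v γ z) s p = eisSummand n F v z s (myTmap γ p) := by
  have hdetj : ∀ j, v j (algebraMap (𝓞 F) F ((γ : Matrix (Fin 2) (Fin 2) (𝓞 F)) 0 0)) *
      v j (algebraMap (𝓞 F) F ((γ : Matrix (Fin 2) (Fin 2) (𝓞 F)) 1 1)) -
      v j (algebraMap (𝓞 F) F ((γ : Matrix (Fin 2) (Fin 2) (𝓞 F)) 0 1)) *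
      v j (algebraMap (𝓞 F) F ((γ : Matrix (Fin 2) (Fin 2) (𝓞 F)) 1 0)) = 1 := by
    intro j
    have h := congrArg (fun x : 𝓞 F => v j (algebraMap (𝓞 F) F x)) (myDet γ)
    simpa [map_sub, map_mul] using h
  have hden : ∀ j, ((v j (algebraMap (𝓞 F) F ((γ : Matrix (Fin 2) (Fin 2) (𝓞 F)) 1 0)) : ℂ)) * z j +
      ((v j (algebraMap (𝓞 F) F ((γ : Matrix (Fin 2) (Fin 2) (𝓞 F)) 1 1)) : ℂ)) ≠ 0 := by
    intro j
    apply myLinNe (hz j).ne'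
    rintro ⟨hc, hd⟩
    have h := hdetj j
    rw [hc, hd] at h
    simp at h
  set B : ℝ := ∏ j, ‖
    (((v j (algebraMap (𝓞 F) F ((γ : Matrix (Fin 2) (Fin 2) (𝓞 F)) 1 0)) : ℂ)) * z j +
      ((v j (algebraMap (𝓞 F) F ((γ : Matrix (Fin 2) (Fin 2) (𝓞 F)) 1 1)) : ℂ)))‖ with hBdef
  have hB : 0 < B := Finset.prod_pos fun j _ => norm_pos_iff.mpr (hden j)
  have hX : 0 < ∏ j, (z j).im := Finset.prod_pos fun j _ => hz j
  have hq : myTmap γ p ≠ 0 := myTmap_ne γ hp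
  have hq' : (myTmap γ p).1 ≠ 0 ∨ (myTmap γ p).2 ≠ 0 := by
    by_contra h
    push_neg at h
    exact hq (Prod.ext h.1 h.2)
  have hvinj : ∀ j (x : 𝓞 F), v j (algebraMap (𝓞 F) F x) = 0 → x = 0 := by
    intro j x hx
    have : algebraMap (𝓞 F) F x = 0 := by
      have := (v j).injective (a₁ := algebraMap (𝓞 F) F x) (a₂ := 0) (by simpa using hx)
      exact this
    exact RingOfIntegers.coe_eq_zero_iff.1 this
  have hnum : ∀ j, ((v j (algebraMap (𝓞 F) F (myTmap γ p).1) : ℂ)) * z j +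
      ((v j (algebraMap (𝓞 F) F (myTmap γ p).2) : ℂ)) ≠ 0 := by
    intro j
    apply myLinNe (hz j).ne'
    rintro ⟨h1, h2⟩
    rcases hq' with h | h
    · exact h (hvinj j _ h1)
    · exact h (hvinj j _ h2)
  set A : ℝ := ‖∏ j, (((v j (algebraMap (𝓞 F) F (myTmap γ p).1) : ℂ)) * z j +
      ((v j (algebraMap (𝓞 F) F (myTmap γ p).2) : ℂ)))‖ with hAdef
  have hA : 0 < A := norm_pos_iff.mpr (Finset.prod_ne_zero_iff.2 fun j _ => hnum j)
  have hImProd : (∏ j, (moebiusHn n F v γ z j).im) = (∏ j, (z j).im) / B ^ 2 := by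
    have him : ∀ j, (moebiusHn n F v γ z j).im = (z j).im /
        ‖((v j (algebraMap (𝓞 F) F ((γ : Matrix (Fin 2) (Fin 2) (𝓞 F)) 1 0)) : ℂ)) * z j +
          ((v j (algebraMap (𝓞 F) F ((γ : Matrix (Fin 2) (Fin 2) (𝓞 F)) 1 1)) : ℂ))‖ ^ 2 := by
      intro j
      exact myImMoebius (hdetj j) (z j)
    rw [Finset.prod_congr rfl (fun j _ => him j), Finset.prod_div_distrib, hBdef,
      ← Finset.prod_pow]
  have hAbsProd : ‖∏ j, (((v j (algebraMap (𝓞 F) F p.1) : ℂ)) * moebiusHn n F v γ z j +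
      ((v j (algebraMap (𝓞 F) F p.2) : ℂ)))‖ = A / B := by
    have hterm : ∀ j, ((v j (algebraMap (𝓞 F) F p.1) : ℂ)) * moebiusHn n F v γ z j +
        ((v j (algebraMap (𝓞 F) F p.2) : ℂ))
        = ((((v j (algebraMap (𝓞 F) F (myTmap γ p).1) : ℂ)) * z j +
            ((v j (algebraMap (𝓞 F) F (myTmap γ p).2) : ℂ)))) /
          (((v j (algebraMap (𝓞 F) F ((γ : Matrix (Fin 2) (Fin 2) (𝓞 F)) 1 0)) : ℂ)) * z j +
            ((v j (algebraMap (𝓞 F) F ((γ : Matrix (Fin 2) (Fin 2) (𝓞 F)) 1 1)) : ℂ))) := by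
      intro j
      rw [moebiusHn]
      simp only [myTmap, map_add, map_mul, Complex.ofReal_add, Complex.ofReal_mul]
      rw [mul_div_assoc', div_add' _ _ _ (hden j), div_left_inj' (hden j)]
      ring
    rw [Finset.prod_congr rfl (fun j _ => hterm j), Finset.prod_div_distrib, norm_div,
      hAdef, hBdef, norm_prod, norm_prod]
  simp only [eisSummand]
  rw [hImProd, hAbsProd]
  exact myCpowKey _ _ _ hX hA hB s

end MyAux

/-- the Eisenstein series `E(z, s)`, defined as the sum over the orbit space
`(O_F² ∖ {0})/O_F^×` (here represented by a set `R` of orbit representatives) of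
`N(y)^s / |N(μz+ν)|^{2s}`, satisfies `E(γ·z, s) = E(z, s)` for every `γ ∈ SL₂(O_F)`. -/
theorem stmt7 (n : ℕ) (F : Type*) [Field F] [NumberField F]
    (hdeg : Module.finrank ℚ F = n)
    (v : Fin n → (F →+* ℝ)) (hv : Function.Injective v)
    (R : Set (𝓞 F × 𝓞 F))
    (hR0 : ∀ p ∈ R, p ≠ 0)
    (hR : ∀ p : 𝓞 F × 𝓞 F, p ≠ 0 →
      ∃! q, q ∈ R ∧ ∃ ε : (𝓞 F)ˣ, q = ((ε : 𝓞 F) * p.1, (ε : 𝓞 F) * p.2))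
    (z : Fin n → ℂ) (hz : ∀ j, 0 < (z j).im) (s : ℂ)
    (γ : Matrix.SpecialLinearGroup (Fin 2) (𝓞 F)) :
    ∑' p : R, eisSummand n F v (moebiusHn n F v γ z) s p =
      ∑' p : R, eisSummand n F v z s p := by
  classical
  have key : ∀ (δ : Matrix.SpecialLinearGroup (Fin 2) (𝓞 F)) (p : R),
      myTmap δ (p : 𝓞 F × 𝓞 F) ≠ 0 := fun δ p => myTmap_ne δ (hR0 p p.2)
  let f : Matrix.SpecialLinearGroup (Fin 2) (𝓞 F) → R → R := fun δ p =>
    ⟨(hR _ (key δ p)).exists.choose, (hR _ (key δ p)).exists.choose_spec.1⟩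
  have fspec : ∀ δ (p : R), ∃ ε : (𝓞 F)ˣ, ((f δ p : 𝓞 F × 𝓞 F)) =
      ((ε : 𝓞 F) * (myTmap δ (p : 𝓞 F × 𝓞 F)).1, (ε : 𝓞 F) * (myTmap δ (p : 𝓞 F × 𝓞 F)).2) :=
    fun δ p => (hR _ (key δ p)).exists.choose_spec.2
  have hfinv : ∀ δ (p : R), f δ⁻¹ (f δ p) = p := by
    intro δ p
    obtain ⟨ε, hε⟩ := fspec δ p
    apply Subtype.ext
    refine ((hR _ (key δ⁻¹ (f δ p))).unique ?_ ?_).symm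
    · -- p satisfies the predicate for Tmap δ⁻¹ (f δ p)
      refine ⟨p.2, ε⁻¹, ?_⟩
      have h1 : myTmap δ⁻¹ ((f δ p : 𝓞 F × 𝓞 F)) =
          ((ε : 𝓞 F) * (p : 𝓞 F × 𝓞 F).1, (ε : 𝓞 F) * (p : 𝓞 F × 𝓞 F).2) := by
        rw [hε, myTmap_unit δ⁻¹ (myTmap δ (p : 𝓞 F × 𝓞 F)) (ε : 𝓞 F), myTmap_inv δ]
      rw [h1]
      apply Prod.ext <;> simp [← mul_assoc]
    · exact (hR _ (key δ⁻¹ (f δ p))).exists.choose_spec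
  have hfinv' : ∀ (p : R), f γ (f γ⁻¹ p) = p := by
    intro p
    have := hfinv γ⁻¹ p
    rwa [inv_inv] at this
  let e : R ≃ R := ⟨f γ, f γ⁻¹, fun p => hfinv γ p, hfinv'⟩
  have hterm : ∀ p : R, eisSummand n F v (moebiusHn n F v γ z) s p
      = eisSummand n F v z s ((f γ p : 𝓞 F × 𝓞 F)) := by
    intro p
    obtain ⟨ε, hε⟩ := fspec γ p
    rw [mySummandMoebius n v γ z hz s _ (hR0 p p.2), hε,
      mySummandUnit n hdeg v hv z s (myTmap γ (p : 𝓞 F × 𝓞 F)) ε]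
  calc ∑' p : R, eisSummand n F v (moebiusHn n F v γ z) s p
      = ∑' p : R, eisSummand n F v z s ((e p : 𝓞 F × 𝓞 F)) := tsum_congr hterm
    _ = ∑' p : R, eisSummand n F v z s p :=
        e.tsum_eq (fun q : R => eisSummand n F v z s (q : 𝓞 F × 𝓞 F))
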